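/- Let G be a minimally bad graph and O a bad connected order of G with greedy colouring π = π_{G,O}. Then for every flat path P in G, every internal vertex u of P satisfies π(u) ∈ {1,2}; consequently, since consecutive internal vertices are adjacent, the colours of the internal vertices of P alternate between 1 and 2 along P. -/

import Mathlib

open Classical in
noncomputable def greedyStep {V : Type*} (G : SimpleGraph V) (f : V → ℕ) (v : V) : V → ℕ :=
  fun u => if u = v then sInf {c : ℕ | 1 ≤ c ∧ ∀ w, G.Adj v w → f w ≠ c} else f u

noncomputable def greedyFrom {V : Type*} (G : SimpleGraph V) (f : V → ℕ) (l : List V) : V → ℕ :=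
  l.foldl (greedyStep G) f

noncomputable def greedy {V : Type*} (G : SimpleGraph V) (l : List V) : V → ℕ :=
  greedyFrom G (fun _ => 0) l

open Classical in
noncomputable def greedyStart2 {V : Type*} (G : SimpleGraph V) : List V → V → ℕ
  | [] => fun _ => 0
  | v :: rest => greedyFrom G (fun u => if u = v then 2 else 0) rest

noncomputable def chi {V : Type*} [Fintype V] (G : SimpleGraph V) : ℕ :=
  sInf {n : ℕ | G.Colorable n}

open Classical in
noncomputable def idx {V : Type*} (l : List V) (v : V) : ℕ := l.idxOf v

noncomputable def maxIdx {V : Type*} (l : List V) (A : Set V) : ℕ := sSup (idx l '' A)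
noncomputable def minIdx {V : Type*} (l : List V) (A : Set V) : ℕ := sInf (idx l '' A)

def IsConnOrder {V : Type*} (G : SimpleGraph V) (l : List V) : Prop :=
  l.Nodup ∧ (∀ v : V, v ∈ l) ∧
    ∀ i : Fin l.length, 0 < i.1 → ∃ j : Fin l.length, j.1 < i.1 ∧ G.Adj (l.get j) (l.get i)

def GoodOrder {V : Type*} [Fintype V] (G : SimpleGraph V) (l : List V) : Prop :=
  ∀ v : V, greedy G l v ≤ chi G

def Good {V : Type*} [Fintype V] (G : SimpleGraph V) : Prop :=
  ∀ s : Finset V, (G.induce (↑s : Set V)).Connected →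
    ∀ l : List ↥(↑s : Set V), IsConnOrder (G.induce (↑s : Set V)) l →
      GoodOrder (G.induce (↑s : Set V)) l

def BadOrder {V : Type*} [Fintype V] (G : SimpleGraph V) (l : List V) : Prop :=
  IsConnOrder G l ∧ ¬ GoodOrder G l

def MinimallyBad {V : Type*} [Fintype V] (G : SimpleGraph V) : Prop :=
  ¬ Good G ∧ ∀ s : Finset V, s ≠ Finset.univ →
    (G.induce (↑s : Set V)).Connected → Good (G.induce (↑s : Set V))

def IsInducedPath {V : Type*} (G : SimpleGraph V) (P : List V) : Prop :=
  P.Nodup ∧ ∀ i j : Fin P.length,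
    G.Adj (P.get i) (P.get j) ↔ (i.1 + 1 = j.1 ∨ j.1 + 1 = i.1)

def IsFlatPath {V : Type*} (G : SimpleGraph V) (P : List V) : Prop :=
  IsInducedPath G P ∧
    ∀ i : Fin P.length, 0 < i.1 → i.1 + 1 < P.length → (G.neighborSet (P.get i)).ncard = 2

def WellOrderedPath {V : Type*} (l P : List V) : Prop :=
  P.Pairwise (fun u v => idx l u < idx l v) ∨ P.Pairwise (fun u v => idx l v < idx l u)

def IsMaxFlatPath {V : Type*} (G : SimpleGraph V) (P : List V) : Prop :=
  IsFlatPath G P ∧ ∀ h : P ≠ [],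
    (G.neighborSet (P.head h)).ncard ≠ 2 ∧ (G.neighborSet (P.getLast h)).ncard ≠ 2

def ClawFree {V : Type*} (G : SimpleGraph V) : Prop :=
  ∀ a b c d : V, G.Adj a b → G.Adj a c → G.Adj a d → b ≠ c → b ≠ d → c ≠ d →
    G.Adj b c ∨ G.Adj b d ∨ G.Adj c d

def IsHole {V : Type*} (G : SimpleGraph V) (C : List V) : Prop :=
  4 ≤ C.length ∧ C.Nodup ∧
    ∀ i j : Fin C.length, G.Adj (C.get i) (C.get j) ↔
      ((i.1 + 1) % C.length = j.1 ∨ (j.1 + 1) % C.length = i.1)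

def GemFree {V : Type*} (G : SimpleGraph V) : Prop :=
  ¬ ∃ a b c d e : V, G.Adj a b ∧ G.Adj b c ∧ G.Adj c d ∧
    ¬ G.Adj a c ∧ ¬ G.Adj a d ∧ ¬ G.Adj b d ∧
    G.Adj e a ∧ G.Adj e b ∧ G.Adj e c ∧ G.Adj e d

/-!
An internal vertex `u` of a flat path has degree two, so greedy gives it colour at most `3`.
If it got `3`, both neighbours of `u` come before it in the order; deleting `u` then leaves a
connected order of `G - u` that colours every other vertex as before. Since `G` is minimally bad,
`G - u` is good, so only `u` can exceed `χ(G)`, which forces `χ(G) ≤ 2`. But on a bipartite graph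
a connected order colours by the bipartition with the colours `1` and `2`, so `u` gets at most `2`.
Consecutive internal vertices are adjacent, hence coloured differently.
-/

section

variable {V W : Type*}

section

variable {G : SimpleGraph V}

def freeColors (G : SimpleGraph V) (f : V → ℕ) (v : V) : Set ℕ :=
  {c | 1 ≤ c ∧ ∀ w, G.Adj v w → f w ≠ c}

lemma freeColors_congr {f g : V → ℕ} {v : V} (h : ∀ w, G.Adj v w → f w = g w) :
    freeColors G f v = freeColors G g v := by
  ext c
  exact and_congr_right fun _ => forall₂_congr fun w hw => by rw [h w hw]

lemma sInf_freeColors_mem [Fintype V] (f : V → ℕ) (v : V) :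
    sInf (freeColors G f v) ∈ freeColors G f v := by
  refine Nat.sInf_mem ⟨Finset.univ.sup f + 1, by omega, fun w _ => ?_⟩
  have := Finset.le_sup (f := f) (Finset.mem_univ w)
  omega

lemma sInf_freeColors_le [Fintype V] (f : V → ℕ) (v : V) :
    sInf (freeColors G f v) ≤ (G.neighborSet v).ncard + 1 := by
  classical
  set N := (G.neighborSet v).toFinset
  -- pigeonhole: the `#N` neighbours cannot take all of the colours `1, …, #N + 1`
  obtain ⟨c, hc, hcN⟩ : ∃ c ∈ Finset.Icc 1 (N.card + 1), c ∉ N.image f := by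
    by_contra! h
    have := Finset.card_le_card (show Finset.Icc 1 (N.card + 1) ⊆ N.image f from h)
    have := N.card_image_le (f := f)
    simp only [Nat.card_Icc] at *
    omega
  rw [Finset.mem_Icc] at hc
  have hfree : c ∈ freeColors G f v :=
    ⟨hc.1, fun w hw hwc => hcN (Finset.mem_image.mpr ⟨w, by simpa [N] using hw, hwc⟩)⟩
  rw [Set.ncard_eq_toFinset_card']
  exact (Nat.sInf_le hfree).trans hc.2

lemma exists_adj_of_lt_sInf_freeColors {f : V → ℕ} {v : V} {c : ℕ} (hc : 1 ≤ c)
    (hlt : c < sInf (freeColors G f v)) : ∃ w, G.Adj v w ∧ f w = c := by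
  by_contra! h
  exact Nat.notMem_of_lt_sInf hlt ⟨hc, h⟩

lemma sInf_freeColors_eq_one {f : V → ℕ} {v : V} (h : ∀ w, G.Adj v w → f w ≠ 1) :
    sInf (freeColors G f v) = 1 :=
  le_antisymm (Nat.sInf_le ⟨le_rfl, h⟩)
    (Nat.sInf_mem (⟨1, le_rfl, h⟩ : (freeColors G f v).Nonempty)).1

lemma sInf_freeColors_eq_two {f : V → ℕ} {v : V} (h₁ : ∃ w, G.Adj v w ∧ f w = 1)
    (h₂ : ∀ w, G.Adj v w → f w ≠ 2) : sInf (freeColors G f v) = 2 := by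
  obtain ⟨w, hw, hw1⟩ := h₁
  have hmem : sInf (freeColors G f v) ∈ freeColors G f v := Nat.sInf_mem ⟨2, by norm_num, h₂⟩
  have hne : sInf (freeColors G f v) ≠ 1 := fun h1 => hmem.2 w hw (hw1.trans h1.symm)
  have := Nat.sInf_le (show 2 ∈ freeColors G f v from ⟨by norm_num, h₂⟩)
  have := hmem.1
  omega

open Classical in
lemma greedyStep_apply (f : V → ℕ) (v w : V) :
    greedyStep G f v w = if w = v then sInf (freeColors G f v) else f w := rfl

lemma greedy_nil (v : V) : greedy G [] v = 0 := rfl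

lemma greedy_append_singleton (l : List V) (v : V) :
    greedy G (l ++ [v]) = greedyStep G (greedy G l) v := by
  simp [greedy, greedyFrom, List.foldl_append]

lemma greedy_of_notMem {l : List V} {v : V} (hv : v ∉ l) : greedy G l v = 0 := by
  induction l using List.reverseRecOn with
  | nil => rfl
  | append_singleton l x ih =>
    simp only [List.mem_append, List.mem_singleton, not_or] at hv
    rw [greedy_append_singleton, greedyStep_apply, if_neg hv.2, ih hv.1]

lemma greedy_append_of_notMem (l₁ : List V) {l₂ : List V} {v : V} (hv : v ∉ l₂) :
    greedy G (l₁ ++ l₂) v = greedy G l₁ v := by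
  induction l₂ using List.reverseRecOn with
  | nil => simp
  | append_singleton l x ih =>
    simp only [List.mem_append, List.mem_singleton, not_or] at hv
    rw [← List.append_assoc, greedy_append_singleton, greedyStep_apply, if_neg hv.2, ih hv.1]

lemma greedy_append_cons_self (A : List V) {B : List V} {v : V} (hv : v ∉ B) :
    greedy G (A ++ v :: B) v = sInf (freeColors G (greedy G A) v) := by
  rw [← List.singleton_append, ← List.append_assoc, greedy_append_of_notMem _ hv,
    greedy_append_singleton, greedyStep_apply, if_pos rfl]

lemma one_le_greedy [Fintype V] {l : List V} {v : V} (hv : v ∈ l) : 1 ≤ greedy G l v := by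
  induction l using List.reverseRecOn with
  | nil => simp at hv
  | append_singleton l x ih =>
    rw [greedy_append_singleton, greedyStep_apply]
    split_ifs with hvx
    · exact (sInf_freeColors_mem _ _).1
    · exact ih (by simpa [hvx] using hv)

lemma greedy_ne_of_adj [Fintype V] {l : List V} {u v : V} (hu : u ∈ l) (hv : v ∈ l)
    (huv : G.Adj u v) : greedy G l u ≠ greedy G l v := by
  induction l using List.reverseRecOn with
  | nil => simp at hu
  | append_singleton l x ih =>
    have hfree := (sInf_freeColors_mem (G := G) (greedy G l) x).2
    simp only [greedy_append_singleton, greedyStep_apply]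
    split_ifs with hux hvx hvx
    · exact absurd (hux.trans hvx.symm) huv.ne
    · exact hfree v (hux ▸ huv) ∘ Eq.symm
    · exact hfree u (hvx ▸ huv.symm)
    · exact ih (by simpa [hux] using hu) (by simpa [hvx] using hv)

lemma greedy_append_cons_of_not_adj (A : List V) {B : List V} {u w : V}
    (hB : ∀ b ∈ B, ¬ G.Adj u b) (hw : w ≠ u) :
    greedy G (A ++ u :: B) w = greedy G (A ++ B) w := by
  induction B using List.reverseRecOn generalizing w with
  | nil => simp [greedy_append_singleton, greedyStep_apply, hw]
  | append_singleton B b ih =>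
    simp only [List.mem_append, List.mem_singleton] at hB
    rw [← List.cons_append, ← List.append_assoc, ← List.append_assoc, greedy_append_singleton,
      greedy_append_singleton, greedyStep_apply, greedyStep_apply,
      freeColors_congr fun x hx => ih (fun b' hb' => hB b' (.inl hb')) ?_,
      ih (fun b' hb' => hB b' (.inl hb')) hw]
    rintro rfl
    exact hB b (.inr rfl) hx.symm

lemma greedy_map {G' : SimpleGraph W} (f : G ↪g G') (l : List V) (v : V) :
    greedy G' (l.map f) (f v) = greedy G l v := by
  induction l using List.reverseRecOn generalizing v with
  | nil => rfl
  | append_singleton l x ih =>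
    have hfree : freeColors G' (greedy G' (l.map f)) (f x) = freeColors G (greedy G l) x := by
      ext c
      refine and_congr_right fun hc => ⟨fun h w hw => ih w ▸ h (f w) (f.map_adj_iff.mpr hw),
        fun h w' hw' => ?_⟩
      by_cases hw'l : w' ∈ l.map f
      · obtain ⟨w, -, rfl⟩ := List.mem_map.mp hw'l
        exact ih w ▸ h w (f.map_adj_iff.mp hw')
      · rw [greedy_of_notMem hw'l]
        omega
    rw [List.map_append, List.map_singleton, greedy_append_singleton, greedy_append_singleton,
      greedyStep_apply, greedyStep_apply, hfree, ih, f.injective.eq_iff]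

def IsConnList (G : SimpleGraph V) (l : List V) : Prop :=
  ∀ i : Fin l.length, 0 < i.1 → ∃ j : Fin l.length, j.1 < i.1 ∧ G.Adj (l.get j) (l.get i)

lemma isConnOrder_iff {l : List V} :
    IsConnOrder G l ↔ l.Nodup ∧ (∀ v, v ∈ l) ∧ IsConnList G l := Iff.rfl

lemma isConnList_nil : IsConnList G [] := fun i => i.elim0

lemma isConnList_append_singleton {l : List V} {v : V} :
    IsConnList G (l ++ [v]) ↔ IsConnList G l ∧ (l ≠ [] → ∃ w ∈ l, G.Adj w v) := by
  simp only [IsConnList, Fin.forall_iff, Fin.exists_iff, List.get_eq_getElem,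
    List.length_append, List.length_singleton]
  constructor
  · intro h
    refine ⟨fun i hi hi0 => ?_, fun hl => ?_⟩
    · obtain ⟨j, hj, hji, hadj⟩ := h i (by omega) hi0
      exact ⟨j, by omega, hji, by simpa [List.getElem_append_left, hi, hji.trans hi] using hadj⟩
    · obtain ⟨j, hj, hji, hadj⟩ := h l.length (by omega) (List.length_pos_iff.mpr hl)
      exact ⟨l[j], List.getElem_mem _, by simpa [List.getElem_append_left, hji] using hadj⟩
  · rintro ⟨hl, hv⟩ i hi hi0
    rcases Nat.lt_or_ge i l.length with hil | hil
    · obtain ⟨j, hj, hji, hadj⟩ := hl i hil hi0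
      exact ⟨j, by omega, hji, by simpa [List.getElem_append_left, hil, hj] using hadj⟩
    · obtain rfl : i = l.length := by omega
      obtain ⟨w, hw, hadj⟩ := hv (List.ne_nil_of_length_pos hi0)
      obtain ⟨j, hj, rfl⟩ := List.getElem_of_mem hw
      exact ⟨j, by omega, hj, by simpa [List.getElem_append_left, hj] using hadj⟩

lemma isConnList_map {G' : SimpleGraph W} (f : G ↪g G') {l : List V} :
    IsConnList G' (l.map f) ↔ IsConnList G l := by
  induction l using List.reverseRecOn with
  | nil => exact iff_of_true isConnList_nil isConnList_nil
  | append_singleton l x ih =>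
    simp [isConnList_append_singleton, ih, f.map_adj_iff]

lemma IsConnList.of_append_cons {A B : List V} {u : V} (h : IsConnList G (A ++ u :: B))
    (hB : ∀ b ∈ B, ¬ G.Adj u b) : IsConnList G (A ++ B) := by
  induction B using List.reverseRecOn with
  | nil => simpa using (isConnList_append_singleton.mp h).1
  | append_singleton B b ih =>
    rw [← List.cons_append, ← List.append_assoc, isConnList_append_singleton] at h
    simp only [List.mem_append, List.mem_singleton] at hB
    obtain ⟨w, hw, hwb⟩ := h.2 (by simp)
    have hwu : w ≠ u := by
      rintro rfl
      exact hB b (.inr rfl) hwb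
    rw [← List.append_assoc, isConnList_append_singleton]
    exact ⟨ih h.1 fun b' hb' => hB b' (.inl hb'),
      fun _ => ⟨w, by simpa [hwu] using hw, hwb⟩⟩

lemma IsConnList.reachable {r w : V} {A : List V} (h : IsConnList G (r :: A))
    (hw : w ∈ r :: A) : G.Reachable r w := by
  induction A using List.reverseRecOn generalizing w with
  | nil => simp_all
  | append_singleton A x ih =>
    rw [← List.cons_append, isConnList_append_singleton] at h
    rw [← List.cons_append, List.mem_append, List.mem_singleton] at hw
    rcases hw with hw | rfl
    · exact ih h.1 hw
    · obtain ⟨v, hv, hvw⟩ := h.2 (List.cons_ne_nil _ _)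
      exact (ih h.1 hv).trans hvw.reachable

lemma IsConnOrder.connected [Nonempty V] {l : List V} (h : IsConnOrder G l) : G.Connected := by
  obtain ⟨-, hmem, hl⟩ := isConnOrder_iff.mp h
  obtain ⟨r, A, rfl⟩ :=
    List.exists_cons_of_ne_nil (List.ne_nil_of_mem (hmem (Classical.arbitrary V)))
  exact (G.connected_iff_exists_forall_reachable).mpr ⟨r, fun w => hl.reachable (hmem w)⟩

lemma isConnOrder_map_iff {H : SimpleGraph W} (f : H ↪g G) (L : List W) :
    IsConnOrder H L ↔ (L.map f).Nodup ∧ (∀ w, f w ∈ L.map f) ∧ IsConnList G (L.map f) := by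
  simp only [isConnOrder_iff, List.nodup_map_iff f.injective,
    List.mem_map_of_injective f.injective, isConnList_map]

lemma IsConnList.greedy_cons_eq (C : G.Coloring (Fin 2)) {r w : V} {A : List V}
    (h : IsConnList G (r :: A)) (hw : w ∈ r :: A) :
    greedy G (r :: A) w = if C w = C r then 1 else 2 := by
  induction A using List.reverseRecOn generalizing w with
  | nil =>
    obtain rfl : w = r := List.mem_singleton.mp hw
    rw [← List.nil_append [w], greedy_append_singleton, greedyStep_apply, if_pos rfl, if_pos rfl,
      sInf_freeColors_eq_one fun _ _ => by simp [greedy_nil]]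
  | append_singleton A x ih =>
    rw [← List.cons_append, isConnList_append_singleton] at h
    rw [← List.cons_append, List.mem_append, List.mem_singleton] at hw
    rw [← List.cons_append, greedy_append_singleton, greedyStep_apply]
    by_cases hwx : w = x
    · subst hwx
      have hy : ∀ y, G.Adj w y →
          greedy G (r :: A) y = 0 ∨ greedy G (r :: A) y = if C y = C r then 1 else 2 := by
        intro y _
        by_cases hyA : y ∈ r :: A
        · exact .inr (ih h.1 hyA)
        · exact .inl (greedy_of_notMem hyA)
      rw [if_pos rfl]
      split_ifs with hside
      · refine sInf_freeColors_eq_one fun y hwy => ?_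
        have : C y ≠ C r := hside ▸ (C.valid hwy).symm
        rcases hy y hwy with h0 | h0 <;> simp [h0, this]
      · have hCy : ∀ y, G.Adj w y → C y = C r := fun y hwy => by
          have := C.valid hwy
          omega
        obtain ⟨y, hyA, hyw⟩ := h.2 (List.cons_ne_nil _ _)
        refine sInf_freeColors_eq_two
          ⟨y, hyw.symm, by rw [ih h.1 hyA, if_pos (hCy y hyw.symm)]⟩ fun y hwy => ?_
        rcases hy y hwy with h0 | h0 <;> simp [h0, hCy y hwy]
    · rw [if_neg hwx]
      exact ih h.1 (hw.resolve_right hwx)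

lemma IsConnList.greedy_le_two {l : List V} (h : IsConnList G l) (h2 : G.Colorable 2) (v : V) :
    greedy G l v ≤ 2 := by
  by_cases hv : v ∈ l
  · obtain ⟨r, A, rfl⟩ := List.exists_cons_of_ne_nil (List.ne_nil_of_mem hv)
    rw [h.greedy_cons_eq h2.some hv]
    split_ifs <;> omega
  · rw [greedy_of_notMem hv]
    omega

end

lemma colorable_chi [Fintype V] (G : SimpleGraph V) : G.Colorable (chi G) :=
  Nat.sInf_mem (s := {n | G.Colorable n}) ⟨Fintype.card V, G.colorable_of_fintype⟩

lemma chi_le_of_hom [Fintype V] [Fintype W] {G : SimpleGraph V} {G' : SimpleGraph W}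
    (f : G →g G') : chi G ≤ chi G' :=
  Nat.sInf_le ((colorable_chi G').of_hom f)

lemma Good.greedy_le_chi [Fintype W] {H : SimpleGraph W} (hH : Good H) {L : List W}
    (hL : IsConnOrder H L) (w : W) : greedy H L w ≤ chi H := by
  let U : Set W := ↑(Finset.univ : Finset W)
  let e : W → U := fun x => ⟨x, Finset.mem_coe.mpr (Finset.mem_univ x)⟩
  let f : H.induce U ↪g H := SimpleGraph.Embedding.induce U
  have hfe : (L.map e).map f = L := by simp [List.map_map, Function.comp_def, f, e]
  have hL' : IsConnOrder (H.induce U) (L.map e) := by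
    rw [isConnOrder_map_iff f, hfe]
    exact ⟨hL.1, fun x => hL.2.1 x, hL.2.2⟩
  have : Nonempty U := ⟨e w⟩
  calc greedy H L w = greedy (H.induce U) (L.map e) (e w) := by rw [← greedy_map f, hfe]; rfl
    _ ≤ chi (H.induce U) := hH _ hL'.connected _ hL' _
    _ ≤ chi H := chi_le_of_hom f.toHom

lemma MinimallyBad.greedy_le_chi_of_ne [Fintype V] {G : SimpleGraph V} (hmin : MinimallyBad G)
    {A B : List V} {u v : V} (hl : IsConnOrder G (A ++ u :: B)) (hB : ∀ b ∈ B, ¬ G.Adj u b)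
    (hvu : v ≠ u) : greedy G (A ++ u :: B) v ≤ chi G := by
  classical
  obtain ⟨hnd, hmem, hconn⟩ := isConnOrder_iff.mp hl
  let s := Finset.univ.erase u
  have hs : ∀ x, x ∈ (s : Set V) ↔ x ≠ u := by simp [s]
  have hsub : (A ++ B).Sublist (A ++ u :: B) := (List.sublist_cons_self u B).append_left A
  have huAB : u ∉ A ++ B := (List.nodup_cons.mp (List.nodup_middle.mp hnd)).1
  have hAB : ∀ x ∈ A ++ B, x ∈ (s : Set V) :=
    fun x hx => (hs x).mpr (ne_of_mem_of_not_mem hx huAB)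
  let f : G.induce s ↪g G := SimpleGraph.Embedding.induce (s : Set V)
  obtain ⟨L, hL⟩ : ∃ L : List (s : Set V), L.map f = A ++ B := CanLift.prf _ hAB
  have hLord : IsConnOrder (G.induce s) L := by
    rw [isConnOrder_map_iff f, hL]
    refine ⟨hsub.nodup hnd, fun x => ?_, hconn.of_append_cons hB⟩
    have hx : (x : V) ≠ u := (hs x).mp x.2
    simpa [hx, f] using hmem x
  have : Nonempty (s : Set V) := ⟨⟨v, (hs v).mpr hvu⟩⟩
  have hgood := hmin.2 s (fun h => Finset.notMem_erase u _ (h ▸ Finset.mem_univ u)) hLord.connected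
  calc greedy G (A ++ u :: B) v = greedy G (A ++ B) v := greedy_append_cons_of_not_adj A hB hvu
    _ = greedy (G.induce s) L ⟨v, (hs v).mpr hvu⟩ := by rw [← hL, ← greedy_map f]; rfl
    _ ≤ chi (G.induce s) := hgood.greedy_le_chi hLord _
    _ ≤ chi G := chi_le_of_hom f.toHom

lemma MinimallyBad.greedy_le_two [Fintype V] {G : SimpleGraph V} (hmin : MinimallyBad G)
    {l : List V} (hbad : BadOrder G l) {u : V} (hdeg : (G.neighborSet u).ncard = 2) :
    greedy G l u ≤ 2 := by
  obtain ⟨hl, hnotgood⟩ := hbad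
  obtain ⟨hnd, hmem, hconn⟩ := isConnOrder_iff.mp hl
  obtain ⟨A, B, rfl⟩ := List.mem_iff_append.mp (hmem u)
  have huB : u ∉ B := (List.nodup_middle.mp hnd |> List.nodup_cons.mp).1 ∘ List.mem_append_right A
  have hu := greedy_append_cons_self (G := G) A huB
  by_contra! hgt
  have hprev : ∀ c, 1 ≤ c → c ≤ 2 → ∃ w ∈ A, G.Adj u w ∧ greedy G A w = c := by
    intro c hc1 hc2
    obtain ⟨w, huw, hwc⟩ := exists_adj_of_lt_sInf_freeColors hc1 (hu ▸ hgt.trans_le' hc2)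
    refine ⟨w, by_contra fun hwA => ?_, huw, hwc⟩
    rw [greedy_of_notMem hwA] at hwc
    omega
  obtain ⟨w₁, hw₁A, huw₁, hw₁⟩ := hprev 1 le_rfl one_le_two
  obtain ⟨w₂, hw₂A, huw₂, hw₂⟩ := hprev 2 one_le_two le_rfl
  have hnbr : G.neighborSet u = {w₁, w₂} := by
    have hsub : {w₁, w₂} ⊆ G.neighborSet u := Set.pair_subset huw₁ huw₂
    refine (Set.eq_of_subset_of_ncard_le hsub ?_ (Set.toFinite _)).symm
    rw [hdeg, Set.ncard_pair (by rintro rfl; omega)]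
  have hB : ∀ b ∈ B, ¬ G.Adj u b := by
    intro b hb hub
    have hbA : b ∈ A := by
      have : b ∈ ({w₁, w₂} : Set V) := hnbr ▸ hub
      rcases this with rfl | rfl
      exacts [hw₁A, hw₂A]
    exact List.disjoint_of_nodup_append hnd hbA (List.mem_cons_of_mem u hb)
  have hle : greedy G (A ++ u :: B) u ≤ 3 := by
    have := sInf_freeColors_le (G := G) (greedy G A) u
    omega
  have hchi : chi G < greedy G (A ++ u :: B) u := by
    simp only [GoodOrder, not_forall, not_le] at hnotgood
    obtain ⟨v, hv⟩ := hnotgood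
    obtain rfl : v = u := by
      by_contra hvu
      exact (hmin.greedy_le_chi_of_ne hl hB hvu).not_gt hv
    exact hv
  have := hconn.greedy_le_two ((colorable_chi G).mono (by omega)) u
  omega

end

theorem stmt11 {V : Type*} [Fintype V] (G : SimpleGraph V) (l : List V)
    (hmin : MinimallyBad G) (hbad : BadOrder G l)
    (P : List V) (hP : IsFlatPath G P) :
    (∀ i (h : i < P.length), 0 < i → i + 1 < P.length →
      (greedy G l (P.get ⟨i, h⟩) = 1 ∨ greedy G l (P.get ⟨i, h⟩) = 2)) ∧
    (∀ i (h : i + 1 < P.length), 0 < i → i + 2 < P.length →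
      greedy G l (P.get ⟨i, by omega⟩) ≠ greedy G l (P.get ⟨i + 1, h⟩)) := by
  obtain ⟨⟨-, hPadj⟩, hPflat⟩ := hP
  have hmem := hbad.1.2.1
  refine ⟨fun i h h0 h1 => ?_, fun i h _ _ => ?_⟩
  · have := hmin.greedy_le_two hbad (hPflat ⟨i, h⟩ h0 h1)
    have := one_le_greedy (G := G) (hmem (P.get ⟨i, h⟩))
    omega
  · exact greedy_ne_of_adj (hmem _) (hmem _) ((hPadj ⟨i, _⟩ ⟨i + 1, h⟩).mpr (.inl rfl))
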